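/- For a standard Gaussian random variable Z and any real z, the Hermite coefficient of the indicator function of the interval (z, ∞) of order q ≥ 1 is given by E[1(Z > z) H_q(Z)] = H_{q-1}(z) φ(z), where H_q denotes the q-th probabilists' Hermite polynomial and φ the standard Gaussian density. -/

import Mathlib

/-!
Since `(φ H_n)' = -φ H_{n+1}` by the recursion `H_{n+1} = X H_n - H_n'`, the integral of
`φ H_{n+1}` over `(z, ∞)` is `φ(z) H_n(z)` minus the limit of `φ H_n` at infinity, and that limit
is `0` because both `φ H_n` and its derivative are integrable.
-/

open MeasureTheory ProbabilityTheory Polynomial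

/-- Standard Gaussian density. -/
noncomputable def stdGaussianPDF (t : ℝ) : ℝ := (2 * Real.pi) ^ (-(1:ℝ)/2) * Real.exp (-t^2 / 2)

/-- Probabilists' Hermite polynomial evaluated at a real. -/
noncomputable def hermiteR (q : ℕ) (t : ℝ) : ℝ := Polynomial.aeval t (Polynomial.hermite q)

open Filter Set Topology

lemma setIntegral_gaussianReal_eq {E : Type*} [NormedAddCommGroup E] [NormedSpace ℝ E]
    {μ : ℝ} {v : NNReal} {f : ℝ → E} {s : Set ℝ} (hv : v ≠ 0) (hs : MeasurableSet s) :
    ∫ x in s, f x ∂gaussianReal μ v = ∫ x in s, gaussianPDFReal μ v x • f x := by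
  rw [← integral_indicator hs, integral_gaussianReal_eq_integral_smul hv, ← integral_indicator hs]
  congr 1 with x
  by_cases hx : x ∈ s <;> simp [hx]

lemma stdGaussianPDF_eq_gaussianPDFReal : stdGaussianPDF = gaussianPDFReal 0 1 := by
  ext t
  have hc : (2 * Real.pi) ^ (-(1:ℝ)/2) = (Real.sqrt (2 * Real.pi))⁻¹ := by
    rw [neg_div, Real.rpow_neg (by positivity), Real.sqrt_eq_rpow, one_div]
  simp [stdGaussianPDF, gaussianPDFReal, hc]

lemma hasDerivAt_stdGaussianPDF (t : ℝ) :
    HasDerivAt stdGaussianPDF (-t * stdGaussianPDF t) t := by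
  have hexp : HasDerivAt (fun s : ℝ => -s ^ 2 / 2) (-t) t :=
    (((hasDerivAt_pow 2 t).neg).div_const 2).congr_deriv (by ring)
  exact ((hexp.exp).const_mul ((2 * Real.pi) ^ (-(1:ℝ)/2))).congr_deriv
    (by rw [stdGaussianPDF]; ring)

lemma hasDerivAt_stdGaussianPDF_mul_hermiteR (n : ℕ) (t : ℝ) :
    HasDerivAt (fun s => stdGaussianPDF s * hermiteR n s)
      (-(stdGaussianPDF t * hermiteR (n + 1) t)) t := by
  have hH : HasDerivAt (hermiteR n) (aeval t (derivative (hermite n))) t :=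
    Polynomial.hasDerivAt_aeval _ t
  refine ((hasDerivAt_stdGaussianPDF t).mul hH).congr_deriv ?_
  simp only [hermiteR, hermite_succ, map_sub, map_mul, aeval_X]
  ring

lemma integrable_stdGaussianPDF_mul_eval (p : ℝ[X]) :
    Integrable fun t => stdGaussianPDF t * p.eval t := by
  induction p using Polynomial.induction_on' with
  | add p q hp hq => simpa [mul_add, Pi.add_def] using hp.add hq
  | monomial n a =>
    have hmoment := integrable_rpow_mul_exp_neg_mul_sq (b := 1/2) (by norm_num)
      (by linarith [n.cast_nonneg (α := ℝ)] : (-1:ℝ) < n)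
    refine (hmoment.const_mul (a * (2 * Real.pi) ^ (-(1:ℝ)/2))).congr (ae_of_all _ fun x => ?_)
    simp only [Real.rpow_natCast, eval_monomial, stdGaussianPDF]
    ring_nf

lemma integrable_stdGaussianPDF_mul_hermiteR (n : ℕ) :
    Integrable fun t => stdGaussianPDF t * hermiteR n t := by
  simpa [hermiteR, aeval_def, eval₂_eq_eval_map] using
    integrable_stdGaussianPDF_mul_eval ((hermite n).map (algebraMap ℤ ℝ))

/-- E[1(Z > z) H_q(Z)] = H_{q-1}(z) φ(z) for a standard Gaussian Z and q ≥ 1. -/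
theorem hermite_coeff_indicator (z : ℝ) (q : ℕ) (hq : 1 ≤ q) :
    ∫ t in Set.Ioi z, hermiteR q t ∂(gaussianReal 0 1) = hermiteR (q - 1) z * stdGaussianPDF z := by
  obtain ⟨n, rfl⟩ := Nat.exists_eq_add_of_le' hq
  have hderiv (t : ℝ) (_ : t ∈ Ioi z) := hasDerivAt_stdGaussianPDF_mul_hermiteR n t
  have hderiv_int : IntegrableOn (fun t => -(stdGaussianPDF t * hermiteR (n + 1) t)) (Ioi z) :=
    (integrable_stdGaussianPDF_mul_hermiteR (n + 1)).neg.integrableOn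
  have hlim : Tendsto (fun t => stdGaussianPDF t * hermiteR n t) atTop (𝓝 0) :=
    tendsto_zero_of_hasDerivAt_of_integrableOn_Ioi hderiv hderiv_int
      (integrable_stdGaussianPDF_mul_hermiteR n).integrableOn
  have hFTC := integral_Ioi_of_hasDerivAt_of_tendsto
    (hasDerivAt_stdGaussianPDF_mul_hermiteR n z).continuousAt.continuousWithinAt
    hderiv hderiv_int hlim
  rw [setIntegral_gaussianReal_eq one_ne_zero measurableSet_Ioi,
    ← stdGaussianPDF_eq_gaussianPDFReal, Nat.add_sub_cancel]
  simp only [smul_eq_mul]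
  rw [integral_neg] at hFTC
  linarith
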